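/- Fix k ≥ 1 and two distinct points a, b ∈ {True,False}^k. For an and/or tree shape s, write P_s^{10} for the probability that the uniform random k-labelling ŝ satisfies f[ŝ](a) = True and f[ŝ](b) = False. Let t be an and/or tree shape whose root has r ≥ 2 children, with root subtrees t_1, …, t_r. Then P_t^{10} = 2^{−r} − ∏_{i=1}^r (1/2 − P_{t_i}^{10}). -/

import Mathlib

/-- A plane rooted tree (shape of an and/or tree). -/
inductive PTree where
  | leaf : PTree
  | node : List PTree → PTree

/-- An and/or tree shape: every internal node has at least two children. -/
inductive IsShape : PTree → Prop
  | leaf : IsShape .leaf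
  | node (cs : List PTree) : 2 ≤ cs.length → (∀ c ∈ cs, IsShape c) → IsShape (.node cs)

/-- The size of a shape: its number of leaves. -/
def PTree.size : PTree → ℕ
  | .leaf => 1
  | .node cs => (cs.attach.map (fun ⟨c, _⟩ => c.size)).sum
decreasing_by
  have := List.sizeOf_lt_of_mem ‹c ∈ cs›; simp only [PTree.node.sizeOf_spec]; omega

/-- The saturation level of a shape: the minimal depth of a leaf. -/
def PTree.satLevel : PTree → ℕ
  | .leaf => 0
  | .node cs => ((cs.attach.map (fun ⟨c, _⟩ => c.satLevel)).min?.getD 0) + 1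
decreasing_by
  have := List.sizeOf_lt_of_mem ‹c ∈ cs›; simp only [PTree.node.sizeOf_spec]; omega

/-- A `k`-labelled and/or tree: internal nodes carry a connective
(`true` = ∧, `false` = ∨), leaves carry a literal: a variable index in `Fin k`
together with a polarity (`true` = positive, `false` = negated). -/
inductive LTree (k : ℕ) where
  | leaf : Fin k → Bool → LTree k
  | node : Bool → List (LTree k) → LTree k

/-- Evaluation of a labelled and/or tree, with the convention that a childless
internal node labelled ∧ (resp. ∨) evaluates to `false` (resp. `true`). -/
def LTree.eval {k : ℕ} : LTree k → (Fin k → Bool) → Bool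
  | .leaf i pos, x => if pos then x i else !(x i)
  | .node c cs, x =>
    if cs.isEmpty then !c
    else if c then (cs.attach.map (fun ⟨t, _⟩ => t.eval x)).all (fun b => b)
    else (cs.attach.map (fun ⟨t, _⟩ => t.eval x)).any (fun b => b)
decreasing_by
  all_goals (have := List.sizeOf_lt_of_mem ‹t ∈ cs›; simp only [LTree.node.sizeOf_spec]; omega)

/-- A valid labelled and/or tree: every internal node has at least two children. -/
inductive IsLShape {k : ℕ} : LTree k → Prop
  | leaf (i : Fin k) (pos : Bool) : IsLShape (.leaf i pos)
  | node (c : Bool) (cs : List (LTree k)) : 2 ≤ cs.length →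
      (∀ t ∈ cs, IsLShape t) → IsLShape (.node c cs)

/-- The size of a labelled tree: its number of leaves. -/
def LTree.size {k : ℕ} : LTree k → ℕ
  | .leaf _ _ => 1
  | .node _ cs => (cs.attach.map (fun ⟨t, _⟩ => t.size)).sum
decreasing_by
  have := List.sizeOf_lt_of_mem ‹t ∈ cs›; simp only [LTree.node.sizeOf_spec]; omega

/-- The list of leaf labels of a labelled tree. -/
def LTree.leaves {k : ℕ} : LTree k → List (Fin k × Bool)
  | .leaf i pos => [(i, pos)]
  | .node _ cs => (cs.attach.map (fun ⟨t, _⟩ => t.leaves)).flatten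
decreasing_by
  have := List.sizeOf_lt_of_mem ‹t ∈ cs›; simp only [LTree.node.sizeOf_spec]; omega

/-- The list of all `k`-labellings of a given shape (each one equally likely
under the uniform random labelling). -/
def labellings (k : ℕ) : PTree → List (LTree k)
  | .leaf => (List.finRange k).flatMap (fun i => [LTree.leaf i true, LTree.leaf i false])
  | .node cs => [true, false].flatMap (fun c =>
      ((cs.attach.map (fun ⟨t, _⟩ => labellings k t)).sections).map (fun l => LTree.node c l))
decreasing_by
  have := List.sizeOf_lt_of_mem ‹t ∈ cs›; simp only [PTree.node.sizeOf_spec]; omega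

open Classical in
/-- The probability that the uniform random `k`-labelling of the shape `t`
computes a Boolean function belonging to the set `s`. -/
noncomputable def Pr (k : ℕ) (t : PTree) (s : Set ((Fin k → Bool) → Bool)) : ℝ :=
  (((labellings k t).filter (fun τ => decide (τ.eval ∈ s))).length : ℝ)
    / ((labellings k t).length : ℝ)

/-- `Pfun k t g` = `P_k[t](g)`: the probability that the uniform random
`k`-labelling of the shape `t` computes exactly the Boolean function `g`. -/
noncomputable def Pfun (k : ℕ) (t : PTree) (g : (Fin k → Bool) → Bool) : ℝ :=
  Pr k t {g}

/-- `x_i` is an essential variable of `f`. -/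
def Essential {k : ℕ} (f : (Fin k → Bool) → Bool) (i : Fin k) : Prop :=
  ∃ x : Fin k → Bool, f (Function.update x i true) ≠ f (Function.update x i false)

open Classical in
/-- The number of essential variables of `f`. -/
noncomputable def essCount {k : ℕ} (f : (Fin k → Bool) → Bool) : ℕ :=
  (Finset.univ.filter (fun i => Essential f i)).card

open Classical in
/-- The complexity `L(f)`: the minimal number of leaves of a valid `k`-labelled
and/or tree computing `f`, with the convention `L(True) = L(False) = 0`. -/
noncomputable def complexity (k : ℕ) (f : (Fin k → Bool) → Bool) : ℕ :=
  if f = (fun _ => true) ∨ f = (fun _ => false) then 0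
  else sInf {n | ∃ τ : LTree k, IsLShape τ ∧ τ.eval = f ∧ τ.size = n}

/-!
The root connective is ∧ or ∨ with probability `1/2` each, and the labellings of the root
subtrees are independent, so probabilities of events of the form "every child satisfies `q`"
factor over the children. The random labelling of any shape evaluates to `True` at a fixed
point with probability `1/2`: the ∧-root makes it true exactly when all children are true, the ∨-root makes
it false exactly when all children are false, and inductively these two events are equally
likely. Hence, with `p_i = P_{t_i}^{10}`, a child satisfies `c(a) = c(b) = True` with probability
`1/2 - p_i`, and likewise `c(a) = c(b) = False`. Under an ∧-root, `f(a) = True ∧ f(b) = False`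
means "all children true at `a`" minus "all children true at `a` and at `b`", of probability
`2^{-r} - ∏ (1/2 - p_i)`; under an ∨-root it means "all children false at `b`" minus "all
children false at `a` and at `b`", of the same probability.
-/

namespace List

variable {α β : Type*}

noncomputable def density (l : List α) (p : α → Bool) : ℝ :=
  (l.countP p : ℝ) / l.length

lemma density_congr {l : List α} {p q : α → Bool} (h : ∀ x ∈ l, p x = q x) :
    l.density p = l.density q := by
  rw [density, density, countP_congr fun x hx => by rw [h x hx]]

lemma density_map (f : β → α) (l : List β) (p : α → Bool) :
    (l.map f).density p = l.density (p ∘ f) := by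
  simp only [density, countP_map, length_map]

lemma density_append_of_length_eq {l₁ l₂ : List α} (h : l₁.length = l₂.length)
    (p : α → Bool) : (l₁ ++ l₂).density p = (l₁.density p + l₂.density p) / 2 := by
  simp only [density, countP_append, length_append, h, Nat.cast_add]
  ring

lemma density_and_not (l : List α) (p q : α → Bool) :
    l.density (fun x => p x && !q x) = l.density p - l.density (fun x => p x && q x) := by
  rw [density, density, density, countP_eq_countP_filter_add l p q, countP_filter,
    countP_filter, Nat.cast_add]
  ring

lemma countP_add_countP_not (p : α → Bool) (l : List α) :
    l.countP p + l.countP (fun x => !p x) = l.length := by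
  simp [length_eq_countP_add_countP p (l := l)]

lemma density_eq_half {l : List α} (hl : l ≠ []) {p : α → Bool}
    (h : l.countP p = l.countP (fun x => !p x)) : l.density p = 1 / 2 := by
  have hlen : (l.length : ℝ) = 2 * l.countP p := by
    rw [← countP_add_countP_not p, ← h]
    push_cast
    ring
  have hpos : (l.length : ℝ) ≠ 0 := by simpa using hl
  rw [density, div_eq_iff hpos, hlen]
  ring

lemma sum_map_ite_eq_mul_countP (S : List α) (p : α → Bool) (n : ℕ) :
    (S.map fun s => if p s then n else 0).sum = n * S.countP p := by
  induction S with
  | nil => simp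
  | cons s S ih =>
    by_cases hs : p s <;> simp only [map_cons, sum_cons, countP_cons, hs, ih] <;> simp; ring

lemma countP_sections_all (p : α → Bool) (Ls : List (List α)) :
    Ls.sections.countP (fun s => s.all p) = (Ls.map (·.countP p)).prod := by
  induction Ls with
  | nil => rfl
  | cons L Ls ih =>
    have h : ∀ s, (L.map (· :: s)).countP (fun s => s.all p)
        = if s.all p then L.countP p else 0 := by
      intro s
      split_ifs with hs <;> simp [countP_map, Function.comp_def, hs]
    show (Ls.sections.flatMap fun s => L.map (· :: s)).countP _ = _
    rw [countP_flatMap]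
    simp only [Function.comp_def, h]
    rw [sum_map_ite_eq_mul_countP, ih, map_cons, prod_cons]

lemma length_sections (Ls : List (List α)) : Ls.sections.length = (Ls.map length).prod := by
  induction Ls with
  | nil => rfl
  | cons L Ls ih =>
    show (Ls.sections.flatMap fun s => L.map (· :: s)).length = _
    simp [length_flatMap, ih, mul_comm]

lemma density_sections_all (p : α → Bool) (Ls : List (List α)) :
    Ls.sections.density (fun s => s.all p) = (Ls.map (·.density p)).prod := by
  rw [density, countP_sections_all, length_sections, Nat.cast_list_prod, Nat.cast_list_prod,
    map_map, map_map]
  simp only [Function.comp_def, density]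
  simpa using (Multiset.prod_map_div (m := (Ls : Multiset (List α)))
    (f := fun L => (L.countP p : ℝ)) (g := fun L => (L.length : ℝ))).symm

lemma all_and_all (l : List α) (p q : α → Bool) :
    (l.all p && l.all q) = l.all (fun x => p x && q x) := by
  rw [Bool.eq_iff_iff]
  simp [forall_and]

lemma density_sections_all_and_not_all (p q : α → Bool) (Ls : List (List α)) :
    Ls.sections.density (fun s => s.all p && !s.all q)
      = (Ls.map (·.density p)).prod - (Ls.map (·.density fun x => p x && q x)).prod := by
  rw [density_and_not, ← density_sections_all, ← density_sections_all]
  exact congrArg _ (density_congr fun s _ => all_and_all s p q)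

lemma ne_nil_of_mem_sections {Ls : List (List α)} (hLs : Ls ≠ []) {s : List α}
    (hs : s ∈ Ls.sections) : s ≠ [] := by
  rw [← length_pos_iff, mem_sections_length hs]
  exact length_pos_iff.2 hLs

end List

section Labellings

variable {k : ℕ}

lemma LTree.eval_node_true {l : List (LTree k)} (hl : l ≠ []) (x : Fin k → Bool) :
    (LTree.node true l).eval x = l.all (·.eval x) := by
  rw [LTree.eval]
  simp [List.isEmpty_iff, hl, List.all_map, Function.comp_def]

lemma LTree.eval_node_false {l : List (LTree k)} (hl : l ≠ []) (x : Fin k → Bool) :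
    (LTree.node false l).eval x = l.any (·.eval x) := by
  rw [LTree.eval]
  simp [List.isEmpty_iff, hl, List.any_map, Function.comp_def]

lemma labellings_node (cs : List PTree) :
    labellings k (.node cs) = (cs.map (labellings k)).sections.map (.node true)
      ++ (cs.map (labellings k)).sections.map (.node false) := by
  rw [labellings]
  simp [List.flatMap]

lemma density_labellings_node (cs : List PTree) (p : LTree k → Bool) :
    (labellings k (.node cs)).density p
      = ((cs.map (labellings k)).sections.density (p ∘ .node true)
        + (cs.map (labellings k)).sections.density (p ∘ .node false)) / 2 := by
  rw [labellings_node, List.density_append_of_length_eq (by simp), List.density_map,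
    List.density_map]

theorem countP_labellings_eval (x : Fin k → Bool) : ∀ t : PTree,
    (labellings k t).countP (·.eval x) = (labellings k t).countP (fun τ => !τ.eval x)
  | .leaf => by
    rw [labellings, List.countP_flatMap, List.countP_flatMap]
    congr 1
    refine List.map_congr_left fun i _ => ?_
    cases h : x i <;> simp [LTree.eval, h]
  | .node cs => by
    have ih : ∀ c ∈ cs, (labellings k c).countP (·.eval x)
        = (labellings k c).countP (fun τ => !τ.eval x) :=
      fun c _ => countP_labellings_eval x c
    rcases eq_or_ne cs [] with rfl | hcs
    · simp [labellings, LTree.eval]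
    rw [labellings_node]
    simp only [List.countP_append, List.countP_map, Function.comp_def]
    set S := (cs.map (labellings k)).sections
    have hS : ∀ s ∈ S, s ≠ [] := fun s hs => List.ne_nil_of_mem_sections (by simpa) hs
    have hall :
        S.countP (fun s => s.all (·.eval x)) = S.countP (fun s => s.all (!·.eval x)) := by
      simp only [S, List.countP_sections_all, List.map_map]
      exact congrArg _ (List.map_congr_left ih)
    have h₁ := List.countP_add_countP_not (fun s => s.all (·.eval x)) S
    have h₂ := List.countP_add_countP_not (fun s => s.all (!·.eval x)) S
    have hcongr {p q : List (LTree k) → Bool} (h : ∀ s : List (LTree k), s ≠ [] → p s = q s) :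
        S.countP p = S.countP q :=
      List.countP_congr fun s hs => by rw [h s (hS s hs)]
    rw [hcongr (p := fun s => (LTree.node true s).eval x) fun s hs => LTree.eval_node_true hs x,
      hcongr (p := fun s => (LTree.node false s).eval x) (q := fun s => !s.all (!·.eval x))
        fun s hs => by rw [LTree.eval_node_false hs, List.any_eq_not_all_not],
      hcongr (p := fun s => !(LTree.node true s).eval x) (q := fun s => !s.all (·.eval x))
        fun s hs => by rw [LTree.eval_node_true hs],
      hcongr (p := fun s => !(LTree.node false s).eval x) (q := fun s => s.all (!·.eval x))
        fun s hs => by rw [LTree.eval_node_false hs, List.any_eq_not_all_not, Bool.not_not]]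
    omega

theorem labellings_ne_nil (hk : 0 < k) : ∀ t : PTree, labellings k t ≠ []
  | .leaf => List.ne_nil_of_mem (a := LTree.leaf ⟨0, hk⟩ true) (by simp [labellings])
  | .node cs => by
    have hS : (cs.map (labellings k)).sections ≠ [] := by
      rw [← List.length_pos_iff, List.length_sections, List.map_map]
      refine List.prod_pos fun n hn => ?_
      obtain ⟨c, _, rfl⟩ := List.mem_map.1 hn
      exact List.length_pos_iff.2 (labellings_ne_nil hk c)
    simp [labellings_node, hS]

lemma density_labellings_eval (hk : 0 < k) (x : Fin k → Bool) (t : PTree) :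
    (labellings k t).density (·.eval x) = 1 / 2 :=
  List.density_eq_half (labellings_ne_nil hk t) (countP_labellings_eval x t)

lemma density_labellings_not_eval (hk : 0 < k) (x : Fin k → Bool) (t : PTree) :
    (labellings k t).density (!·.eval x) = 1 / 2 :=
  List.density_eq_half (labellings_ne_nil hk t)
    (by simpa using (countP_labellings_eval x t).symm)

lemma pr_eq_density {s : Set ((Fin k → Bool) → Bool)} {p : LTree k → Bool}
    (hp : ∀ τ, p τ = true ↔ τ.eval ∈ s) (t : PTree) : Pr k t s = (labellings k t).density p := by
  classical
  rw [Pr, List.density, List.countP_eq_length_filter]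
  congr 3
  exact List.filter_congr fun τ _ => by rw [Bool.eq_iff_iff, hp]; exact decide_eq_true_iff

end Labellings

section TwoPoint

variable {k : ℕ} (a b : Fin k → Bool)

lemma density_labellings_eval_and_eval (hk : 0 < k) (t : PTree) :
    (labellings k t).density (fun τ => τ.eval a && τ.eval b)
      = 1 / 2 - (labellings k t).density (fun τ => τ.eval a && !τ.eval b) := by
  rw [List.density_and_not, density_labellings_eval hk]
  ring

lemma density_labellings_not_eval_and_not_eval (hk : 0 < k) (t : PTree) :
    (labellings k t).density (fun τ => !τ.eval b && !τ.eval a)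
      = 1 / 2 - (labellings k t).density (fun τ => τ.eval a && !τ.eval b) := by
  have h := List.density_and_not (labellings k t) (!·.eval b) (!·.eval a)
  have hsep : (labellings k t).density (fun τ => !τ.eval b && !!τ.eval a)
      = (labellings k t).density (fun τ => τ.eval a && !τ.eval b) :=
    List.density_congr fun τ _ => by rw [Bool.not_not, Bool.and_comm]
  rw [hsep, density_labellings_not_eval hk] at h
  linarith

lemma density_labellings_node_eval_and_not_eval {cs : List PTree} (hcs : cs ≠ []) :
    (labellings k (.node cs)).density (fun τ => τ.eval a && !τ.eval b)
      = ((cs.map (labellings k)).sections.density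
            (fun s => s.all (·.eval a) && !s.all (·.eval b))
        + (cs.map (labellings k)).sections.density
            (fun s => s.all (!·.eval b) && !s.all (!·.eval a))) / 2 := by
  have hS := fun s (hs : s ∈ (cs.map (labellings k)).sections) =>
    List.ne_nil_of_mem_sections (by simpa) hs
  rw [density_labellings_node]
  congr 2
  · exact List.density_congr fun s hs => by
      simp only [Function.comp_apply, LTree.eval_node_true (hS s hs)]
  · exact List.density_congr fun s hs => by
      simp only [Function.comp_apply, LTree.eval_node_false (hS s hs), List.any_eq_not_all_not]
      cases s.all (!·.eval a) <;> cases s.all (!·.eval b) <;> rfl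

end TwoPoint

theorem andor_two_point_recursion_general (k : ℕ) (hk : 1 ≤ k) (a b : Fin k → Bool)
    (cs : List PTree) (hr : 2 ≤ cs.length) :
    Pr k (.node cs) {g | g a = true ∧ g b = false}
      = 1 / 2 ^ cs.length
        - (cs.map (fun c => 1 / 2 - Pr k c {g | g a = true ∧ g b = false})).prod := by
  have hPr := pr_eq_density (s := {g | g a = true ∧ g b = false})
    (p := fun τ : LTree k => τ.eval a && !τ.eval b) fun τ => by simp
  simp only [hPr]
  rw [density_labellings_node_eval_and_not_eval a b (List.ne_nil_of_length_pos (by omega)),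
    List.density_sections_all_and_not_all, List.density_sections_all_and_not_all]
  simp only [List.map_map, Function.comp_def, density_labellings_eval hk,
    density_labellings_not_eval hk, density_labellings_eval_and_eval a b hk,
    density_labellings_not_eval_and_not_eval a b hk, List.map_const', List.prod_replicate,
    one_div_pow]
  ring

/-- Recursion for `P_t^{10}`: if the root of a shape has
`r ≥ 2` children with subtrees `t_1, …, t_r`, then
`P_t^{10} = 2^(-r) − ∏_i (1/2 − P_{t_i}^{10})`. -/
theorem andor_two_point_recursion (k : ℕ) (hk : 1 ≤ k) (a b : Fin k → Bool)
    (hab : a ≠ b) (cs : List PTree) (hr : 2 ≤ cs.length)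
    (hcs : ∀ c ∈ cs, IsShape c) :
    Pr k (.node cs) {g | g a = true ∧ g b = false}
      = 1 / 2 ^ cs.length
        - (cs.map (fun c => 1 / 2 - Pr k c {g | g a = true ∧ g b = false})).prod :=
  andor_two_point_recursion_general k hk a b cs hr
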